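/- Let R be a graded ring in non-negative degrees and M a graded R-module bounded below. If N ⊆ M is a submodule admitting a finite Gröbner basis {x_i} such that the syzygy module of the initial terms in(x_i) is finitely generated, then N is finitely presented as an R-module. -/

import Mathlib

open DirectSum

section Defs

variable {A : Type*} [CommRing A] (𝒜 : ℤ → AddSubgroup A) [GradedRing 𝒜]
variable {M : Type*} [AddCommGroup M] [Module A M] (ℳ : ℤ → AddSubgroup M)
  [DirectSum.Decomposition ℳ]

/-- The degree of an element of a graded object: the largest `n` whose homogeneous
component is nonzero (junk value for `x = 0`). -/
noncomputable def mdeg {σ M : Type*} [AddCommMonoid M] [SetLike σ M] [AddSubmonoidClass σ M]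
    (ℳ : ℤ → σ) [DirectSum.Decomposition ℳ] (x : M) : ℤ :=
  sSup {n : ℤ | (DirectSum.decompose ℳ x n : M) ≠ 0}

/-- The initial (top-degree) term of an element. -/
noncomputable def ini {σ M : Type*} [AddCommMonoid M] [SetLike σ M] [AddSubmonoidClass σ M]
    (ℳ : ℤ → σ) [DirectSum.Decomposition ℳ] (x : M) : M :=
  (DirectSum.decompose ℳ x (mdeg ℳ x) : M)

/-- The initial submodule of a submodule `N`: generated by initial terms of nonzero
elements of `N`. -/
def iniSub (N : Submodule A M) : Submodule A M :=
  Submodule.span A {m : M | ∃ x ∈ N, x ≠ 0 ∧ ini ℳ x = m}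

/-- The ring grading is supported in non-negative degrees. -/
def RingNonnegGraded : Prop := ∀ n < (0 : ℤ), ∀ a ∈ 𝒜 n, a = (0 : A)

/-- The module grading is bounded below. -/
def ModuleBddBelow : Prop := ∃ n₀ : ℤ, ∀ n < n₀, ∀ m ∈ ℳ n, m = (0 : M)

/-- A family of elements of `N` is a Gröbner basis for `N`. -/
def IsGrobnerBasis {I : Type*} (N : Submodule A M) (x : I → M) : Prop :=
  (∀ i, x i ∈ N) ∧
    Submodule.span A (Set.range fun i => ini ℳ (x i)) = iniSub ℳ N

/-- `a` gives a reduced expression `y = ∑ aᵢ xᵢ` with `deg aᵢ + deg xᵢ ≤ deg y`. -/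
def IsReducedExpr {I : Type*} (x : I → M) (y : M) (a : I →₀ A) : Prop :=
  y = a.sum (fun i c => c • x i) ∧
    ∀ i ∈ a.support, mdeg 𝒜 (a i) + mdeg ℳ (x i) ≤ mdeg ℳ y

/-- Set version of a Gröbner basis. -/
def IsGrobnerBasisSet (N : Submodule A M) (s : Set M) : Prop :=
  s ⊆ (N : Set M) ∧ Submodule.span A (ini ℳ '' s) = iniSub ℳ N

/-- `y` has a reduced expression in terms of the elements of `s`. -/
def HasReducedExprSet (s : Set M) (y : M) : Prop :=
  ∃ a : M →₀ A, ↑a.support ⊆ s ∧ y = a.sum (fun m c => c • m) ∧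
    ∀ m ∈ a.support, mdeg 𝒜 (a m) + mdeg ℳ m ≤ mdeg ℳ y

/-- A submodule is homogeneous when it contains all homogeneous components of its
elements. -/
def IsHomogSubmodule (N : Submodule A M) : Prop :=
  ∀ x ∈ N, ∀ n : ℤ, (DirectSum.decompose ℳ x n : M) ∈ N

/-- Graded-coherent: finitely generated, and every finitely generated homogeneous
submodule is finitely presented. -/
def GradedCoherent : Prop :=
  Module.Finite A M ∧ ∀ N : Submodule A M, N.FG → IsHomogSubmodule ℳ N →
    Module.FinitePresentation A N

/-- Gröbner-coherent: graded-coherent, and every finitely generated (possibly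
inhomogeneous) submodule admits a finite Gröbner basis. -/
def GrobnerCoherent : Prop :=
  GradedCoherent (A := A) ℳ ∧ ∀ N : Submodule A M, N.FG →
    ∃ s : Finset M, IsGrobnerBasisSet ℳ N ↑s

/-- A homogeneous generating family of syzygies of the initial terms of the `x i`
(with the free module graded by `deg eᵢ = deg xᵢ`). -/
def IsHomogSyzygyGens {I J : Type*} (x : I → M) (c : J → I →₀ A) : Prop :=
  (∀ j, ∃ d : ℤ, ∀ i, c j i ∈ 𝒜 (d - mdeg ℳ (x i))) ∧
    Submodule.span A (Set.range c) =
      LinearMap.ker (Finsupp.linearCombination A fun i => ini ℳ (x i))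

/-- Set version of a homogeneous generating set of syzygies of initial terms. -/
def IsHomogSyzygyGensSet (X : Set M) (C : Set (M →₀ A)) : Prop :=
  (∀ c ∈ C, ↑c.support ⊆ X) ∧
  (∀ c ∈ C, ∃ d : ℤ, ∀ m : M, c m ∈ 𝒜 (d - mdeg ℳ m)) ∧
  Submodule.span A C =
    Finsupp.supported A A X ⊓
      LinearMap.ker (Finsupp.linearCombination A fun m : M => ini ℳ m)

/-- The elements `z = ∑ c m • m` attached to a set of syzygies `C`. -/
def zElems (C : Set (M →₀ A)) : Set M :=
  (fun c : M →₀ A => c.sum fun m coeff => coeff • m) '' C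

/-- One step of Buchberger's algorithm: adjoin the `z`-elements of a homogeneous
generating set of syzygies. -/
def BuchbergerStep (X Y : Set M) : Prop :=
  ∃ C : Set (M →₀ A), IsHomogSyzygyGensSet 𝒜 ℳ X C ∧ Y = X ∪ zElems C

end Defs

set_option linter.unusedSectionVars false

section Basic
variable {σ M : Type*} [AddCommMonoid M] [SetLike σ M] [AddSubmonoidClass σ M]
    (ℳ : ℤ → σ) [DirectSum.Decomposition ℳ]

lemma dsupp_finite (x : M) : {n : ℤ | (DirectSum.decompose ℳ x n : M) ≠ 0}.Finite := by
  classical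
  apply Set.Finite.subset (DFinsupp.support (DirectSum.decompose ℳ x)).finite_toSet
  intro n hn
  simp only [DFinsupp.mem_support_toFun, Finset.mem_coe]
  intro h
  exact hn (by simp [h])

lemma dsupp_nonempty {x : M} (hx : x ≠ 0) :
    {n : ℤ | (DirectSum.decompose ℳ x n : M) ≠ 0}.Nonempty := by
  by_contra h
  rw [Set.not_nonempty_iff_eq_empty] at h
  apply hx
  classical
  rw [← DirectSum.sum_support_decompose ℳ x]
  apply Finset.sum_eq_zero
  intro n _
  by_contra hn
  exact (Set.eq_empty_iff_forall_notMem.mp h n) hn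

lemma decompose_mdeg_ne_zero {x : M} (hx : x ≠ 0) :
    (DirectSum.decompose ℳ x (mdeg ℳ x) : M) ≠ 0 :=
  (dsupp_nonempty ℳ hx).csSup_mem (dsupp_finite ℳ x)

lemma ini_ne_zero {x : M} (hx : x ≠ 0) : ini ℳ x ≠ 0 := decompose_mdeg_ne_zero ℳ hx

lemma decompose_eq_zero_of_gt {x : M} {n : ℤ} (hn : mdeg ℳ x < n) :
    (DirectSum.decompose ℳ x n : M) = 0 := by
  by_contra h
  exact absurd (le_csSup ((dsupp_finite ℳ x).bddAbove) h) (not_le.mpr hn)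

lemma mdeg_of_mem {m : M} {d : ℤ} (hm : m ∈ ℳ d) (h0 : m ≠ 0) : mdeg ℳ m = d := by
  have : {n : ℤ | (DirectSum.decompose ℳ m n : M) ≠ 0} = {d} := by
    ext n
    simp only [Set.mem_setOf_eq, Set.mem_singleton_iff]
    constructor
    · intro h
      by_contra hne
      exact h (DirectSum.decompose_of_mem_ne ℳ hm (Ne.symm hne))
    · rintro rfl
      rw [DirectSum.decompose_of_mem_same ℳ hm]
      exact h0
  rw [mdeg, this, csSup_singleton]

lemma ini_mem (x : M) : ini ℳ x ∈ ℳ (mdeg ℳ x) := SetLike.coe_mem _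

lemma mdeg_le_iff {x : M} {d : ℤ} (hx : x ≠ 0) :
    mdeg ℳ x ≤ d ↔ ∀ n, d < n → (DirectSum.decompose ℳ x n : M) = 0 := by
  constructor
  · intro h n hn
    exact decompose_eq_zero_of_gt ℳ (lt_of_le_of_lt h hn)
  · intro h
    by_contra hc
    exact decompose_mdeg_ne_zero ℳ hx (h _ (not_le.mp hc))

end Basic

section SubLemma
variable {M : Type*} [AddCommGroup M] (ℳ : ℤ → AddSubgroup M) [DirectSum.Decomposition ℳ]

lemma decompose_apply_sub (x y : M) (n : ℤ) :
    (DirectSum.decompose ℳ (x - y) n : M)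
      = (DirectSum.decompose ℳ x n : M) - (DirectSum.decompose ℳ y n : M) := by
  rw [DirectSum.decompose_sub, DirectSum.sub_apply, AddSubgroupClass.coe_sub]

lemma decompose_apply_add' (x y : M) (n : ℤ) :
    (DirectSum.decompose ℳ (x + y) n : M)
      = (DirectSum.decompose ℳ x n : M) + (DirectSum.decompose ℳ y n : M) := by
  rw [DirectSum.decompose_add, DirectSum.add_apply, AddSubgroup.coe_add]

end SubLemma

section Smul
variable {A : Type*} [CommRing A] (𝒜 : ℤ → AddSubgroup A) [GradedRing 𝒜]
variable {M : Type*} [AddCommGroup M] [Module A M] (ℳ : ℤ → AddSubgroup M)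
  [DirectSum.Decomposition ℳ] [SetLike.GradedSMul 𝒜 ℳ]

set_option synthInstance.maxHeartbeats 1000000 in
lemma decompose_apply_sum {α : Type*} (s : Finset α) (f : α → M) (n : ℤ) :
    (DirectSum.decompose ℳ (∑ j ∈ s, f j) n : M) = ∑ j ∈ s, (DirectSum.decompose ℳ (f j) n : M) := by
  classical
  induction s using Finset.induction with
  | empty => simp
  | insert _ _ h ih => rw [Finset.sum_insert h, Finset.sum_insert h, ← ih]; simp

lemma smul_mem_graded {a : A} {m : M} {j k : ℤ} (ha : a ∈ 𝒜 j) (hm : m ∈ ℳ k) :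
    a • m ∈ ℳ (j + k) := SetLike.GradedSMul.smul_mem ha hm

/-- L1 -/
lemma decompose_smul_homog_right {m : M} {k : ℤ} (hm : m ∈ ℳ k) (a : A) (n : ℤ) :
    (DirectSum.decompose ℳ (a • m) n : M) = (DirectSum.decompose 𝒜 a (n - k) : A) • m := by
  classical
  conv_lhs => rw [← DirectSum.sum_support_decompose 𝒜 a]
  rw [Finset.sum_smul, decompose_apply_sum]
  rw [show (DirectSum.decompose 𝒜 a (n - k) : A) • m
      = ∑ j ∈ (DirectSum.decompose 𝒜 a).support,
        (if j = n - k then (DirectSum.decompose 𝒜 a j : A) • m else 0) by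
    rw [Finset.sum_ite_eq' (DirectSum.decompose 𝒜 a).support]
    split
    · rfl
    · next h =>
      have : (DirectSum.decompose 𝒜 a (n - k) : A) = 0 := by
        by_contra hc
        exact h (DFinsupp.mem_support_iff.mpr (fun hz => hc (by rw [hz]; rfl)))
      rw [this, zero_smul]]
  apply Finset.sum_congr rfl
  intro j _
  have hmem : (DirectSum.decompose 𝒜 a j : A) • m ∈ ℳ (j + k) :=
    smul_mem_graded 𝒜 ℳ (SetLike.coe_mem _) hm
  split
  · next h =>
    subst h
    have hmem' : (DirectSum.decompose 𝒜 a (n - k) : A) • m ∈ ℳ n := by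
      rwa [show n - k + k = n by ring] at hmem
    rw [DirectSum.decompose_of_mem_same ℳ hmem']
  · next h =>
    rw [DirectSum.decompose_of_mem_ne ℳ hmem (by omega)]

/-- L2 -/
lemma decompose_smul_homog_left {a : A} {j : ℤ} (ha : a ∈ 𝒜 j) (m : M) (n : ℤ) :
    (DirectSum.decompose ℳ (a • m) n : M) = a • (DirectSum.decompose ℳ m (n - j) : M) := by
  classical
  conv_lhs => rw [← DirectSum.sum_support_decompose ℳ m]
  rw [Finset.smul_sum, decompose_apply_sum]
  rw [show a • (DirectSum.decompose ℳ m (n - j) : M)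
      = ∑ k ∈ (DirectSum.decompose ℳ m).support,
        (if k = n - j then a • (DirectSum.decompose ℳ m k : M) else 0) by
    rw [Finset.sum_ite_eq' (DirectSum.decompose ℳ m).support]
    split
    · rfl
    · next h =>
      have : (DirectSum.decompose ℳ m (n - j) : M) = 0 := by
        by_contra hc
        exact h (DFinsupp.mem_support_iff.mpr (fun hz => hc (by rw [hz]; rfl)))
      rw [this, smul_zero]]
  apply Finset.sum_congr rfl
  intro k _
  have hmem : a • (DirectSum.decompose ℳ m k : M) ∈ ℳ (j + k) :=
    smul_mem_graded 𝒜 ℳ ha (SetLike.coe_mem _)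
  split
  · next h =>
    subst h
    have hmem' : a • (DirectSum.decompose ℳ m (n - j) : M) ∈ ℳ n := by
      rwa [show j + (n - j) = n by ring] at hmem
    rw [DirectSum.decompose_of_mem_same ℳ hmem']
  · next h =>
    rw [DirectSum.decompose_of_mem_ne ℳ hmem (by omega)]

end Smul

section LemA
variable {A : Type*} [CommRing A] (𝒜 : ℤ → AddSubgroup A) [GradedRing 𝒜]
variable {M : Type*} [AddCommGroup M] [Module A M] (ℳ : ℤ → AddSubgroup M)
  [DirectSum.Decomposition ℳ] [SetLike.GradedSMul 𝒜 ℳ]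

lemma mdeg_ge {n₀ : ℤ} (hM : ∀ n < n₀, ∀ m ∈ ℳ n, m = (0 : M)) {y : M} (hy : y ≠ 0) :
    n₀ ≤ mdeg ℳ y := by
  by_contra h
  exact ini_ne_zero ℳ hy (hM _ (not_le.mp h) _ (ini_mem ℳ y))

lemma lemA {n₀ : ℤ} (hM : ∀ n < n₀, ∀ m ∈ ℳ n, m = (0 : M))
    (N : Submodule A M) {I : Type*} [Fintype I] (x : I → M)
    (hGB : IsGrobnerBasis ℳ N x) :
    ∀ (k : ℕ) (y : M), y ∈ N → (y = 0 ∨ mdeg ℳ y < n₀ + k) →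
      ∃ a : I → A, y = ∑ i, a i • x i ∧
        ∀ i n, (DirectSum.decompose 𝒜 (a i) n : A) ≠ 0 →
          y ≠ 0 ∧ n + mdeg ℳ (x i) ≤ mdeg ℳ y := by
  intro k
  induction k with
  | zero =>
    intro y hyN hy
    rcases eq_or_ne y 0 with rfl | hy0
    · exact ⟨0, by simp, by simp⟩
    · exact absurd (mdeg_ge ℳ hM hy0) (by
        rcases hy with h | hlt
        · exact absurd h hy0
        · push_cast at hlt; omega)
  | succ k ih =>
    intro y hyN hy
    rcases eq_or_ne y 0 with rfl | hy0
    · exact ⟨0, by simp, by simp⟩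
    have hD : mdeg ℳ y < n₀ + (k + 1 : ℕ) := hy.resolve_left hy0
    set D := mdeg ℳ y with hDdef
    have hini : ini ℳ y ∈ Submodule.span A (Set.range fun i => ini ℳ (x i)) := by
      rw [hGB.2]
      exact Submodule.subset_span ⟨y, hyN, hy0, rfl⟩
    rw [Submodule.mem_span_range_iff_exists_fun] at hini
    obtain ⟨c, hc⟩ := hini
    set a : I → A := fun i => (DirectSum.decompose 𝒜 (c i) (D - mdeg ℳ (x i)) : A) with ha
    have hahom : ∀ i, a i ∈ 𝒜 (D - mdeg ℳ (x i)) := fun i => SetLike.coe_mem _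
    have htop : ∑ i, a i • ini ℳ (x i) = ini ℳ y := by
      have h1 := congrArg (fun z => (DirectSum.decompose ℳ z D : M)) hc
      simp only at h1
      rw [decompose_apply_sum ℳ,
        DirectSum.decompose_of_mem_same ℳ (ini_mem ℳ y)] at h1
      rw [← h1]
      apply Finset.sum_congr rfl
      intro i _
      rw [decompose_smul_homog_right 𝒜 ℳ (ini_mem ℳ (x i))]
    set y' := y - ∑ i, a i • x i with hy'
    have hy'N : y' ∈ N := Submodule.sub_mem N hyN
      (Submodule.sum_mem N fun i _ => Submodule.smul_mem N _ (hGB.1 i))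
    have hterm : ∀ (n : ℤ) i, (DirectSum.decompose ℳ (a i • x i) n : M)
        = a i • (DirectSum.decompose ℳ (x i) (n - (D - mdeg ℳ (x i))) : M) := fun n i =>
      decompose_smul_homog_left 𝒜 ℳ (hahom i) (x i) n
    have hy'comp : ∀ n, D ≤ n → (DirectSum.decompose ℳ y' n : M) = 0 := by
      intro n hn
      rw [hy', decompose_apply_sub ℳ, decompose_apply_sum ℳ,
        Finset.sum_congr rfl fun i _ => hterm n i]
      rcases eq_or_lt_of_le hn with rfl | hgt
      · have h2 : ∀ i, a i • (DirectSum.decompose ℳ (x i) (D - (D - mdeg ℳ (x i))) : M)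
            = a i • ini ℳ (x i) := by
          intro i
          rw [show D - (D - mdeg ℳ (x i)) = mdeg ℳ (x i) by ring]
          rfl
        rw [Finset.sum_congr rfl fun i _ => h2 i, htop]
        show (DirectSum.decompose ℳ y (mdeg ℳ y) : M) - ini ℳ y = 0
        rw [show (DirectSum.decompose ℳ y (mdeg ℳ y) : M) = ini ℳ y from rfl, sub_self]
      · rw [decompose_eq_zero_of_gt ℳ hgt,
          Finset.sum_congr rfl fun i _ =>
            (by rw [decompose_eq_zero_of_gt ℳ (by omega), smul_zero] :
              a i • (DirectSum.decompose ℳ (x i) (n - (D - mdeg ℳ (x i))) : M) = 0)]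
        simp
    have hy'lt : y' = 0 ∨ mdeg ℳ y' < n₀ + k := by
      rcases eq_or_ne y' 0 with h | h
      · exact Or.inl h
      · right
        have hlt : mdeg ℳ y' < D := by
          by_contra hcon
          exact decompose_mdeg_ne_zero ℳ h (hy'comp _ (not_lt.mp hcon))
        push_cast at hD
        omega
    obtain ⟨a', ha'1, ha'2⟩ := ih y' hy'N hy'lt
    refine ⟨a' + a, ?_, ?_⟩
    · have hyy : y = y' + ∑ i, a i • x i := by rw [hy']; abel
      rw [hyy, ha'1, ← Finset.sum_add_distrib]
      apply Finset.sum_congr rfl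
      intro i _
      rw [Pi.add_apply, add_smul]
    · intro i n hn
      rw [Pi.add_apply] at hn
      have h2 : (DirectSum.decompose 𝒜 (a' i) n : A) ≠ 0 ∨
          (DirectSum.decompose 𝒜 (a i) n : A) ≠ 0 := by
        by_contra hcon
        push_neg at hcon
        apply hn
        rw [decompose_apply_add' 𝒜, hcon.1, hcon.2, add_zero]
      refine ⟨hy0, ?_⟩
      rcases h2 with h2 | h2
      · obtain ⟨hy'0, hle⟩ := ha'2 i n h2
        have hlt : mdeg ℳ y' < D := by
          by_contra hcon
          exact decompose_mdeg_ne_zero ℳ hy'0 (hy'comp _ (not_lt.mp hcon))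
        omega
      · rcases eq_or_ne n (D - mdeg ℳ (x i)) with rfl | hne
        · omega
        · exact absurd (DirectSum.decompose_of_mem_ne 𝒜 (hahom i) (Ne.symm hne)) h2

end LemA

section LemB
variable {A : Type*} [CommRing A] (𝒜 : ℤ → AddSubgroup A) [GradedRing 𝒜]
variable {M : Type*} [AddCommGroup M] [Module A M] (ℳ : ℤ → AddSubgroup M)
  [DirectSum.Decomposition ℳ] [SetLike.GradedSMul 𝒜 ℳ]

lemma lincomb_eq {I : Type*} [Fintype I] (v : I → M) (a : I →₀ A) :
    Finsupp.linearCombination A v a = ∑ i, a i • v i := by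
  rw [Finsupp.linearCombination_apply, Finsupp.sum_fintype]
  intro i
  exact zero_smul A (v i)

/-- decomposition of `a • w` at a degree at least all `m + mdeg w` over components of `a`. -/
lemma decompose_smul_bound (a : A) (w : M) (n : ℤ)
    (hb : ∀ m : ℤ, (DirectSum.decompose 𝒜 a m : A) ≠ 0 → m + mdeg ℳ w ≤ n) :
    (DirectSum.decompose ℳ (a • w) n : M)
      = (DirectSum.decompose 𝒜 a (n - mdeg ℳ w) : A) • ini ℳ w := by
  classical
  conv_lhs => rw [← DirectSum.sum_support_decompose 𝒜 a]
  rw [Finset.sum_smul, decompose_apply_sum ℳ]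
  rw [show (DirectSum.decompose 𝒜 a (n - mdeg ℳ w) : A) • ini ℳ w
      = ∑ m ∈ (DirectSum.decompose 𝒜 a).support,
        (if m = n - mdeg ℳ w then (DirectSum.decompose 𝒜 a m : A) • ini ℳ w else 0) by
    rw [Finset.sum_ite_eq' (DirectSum.decompose 𝒜 a).support]
    split
    · rfl
    · next h =>
      have : (DirectSum.decompose 𝒜 a (n - mdeg ℳ w) : A) = 0 := by
        by_contra hc
        exact h (DFinsupp.mem_support_iff.mpr (fun hz => hc (by rw [hz]; rfl)))
      rw [this, zero_smul]]
  apply Finset.sum_congr rfl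
  intro m hm
  rw [decompose_smul_homog_left 𝒜 ℳ (SetLike.coe_mem _) w n]
  have hane : (DirectSum.decompose 𝒜 a m : A) ≠ 0 := by
    intro hz
    exact (DFinsupp.mem_support_iff.mp hm) (by ext; rw [hz]; rfl)
  split
  · next h =>
    subst h
    rw [show n - (n - mdeg ℳ w) = mdeg ℳ w by ring]
    rfl
  · next h =>
    have : mdeg ℳ w < n - m := by
      have := hb m hane
      omega
    rw [decompose_eq_zero_of_gt ℳ this, smul_zero]

end LemB

section LemB2
variable {A : Type*} [CommRing A] (𝒜 : ℤ → AddSubgroup A) [GradedRing 𝒜]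
variable {M : Type*} [AddCommGroup M] [Module A M] (ℳ : ℤ → AddSubgroup M)
  [DirectSum.Decomposition ℳ] [SetLike.GradedSMul 𝒜 ℳ]

lemma lemA' {n₀ : ℤ} (hM : ∀ n < n₀, ∀ m ∈ ℳ n, m = (0 : M))
    (N : Submodule A M) {I : Type*} [Fintype I] (x : I → M)
    (hGB : IsGrobnerBasis ℳ N x) (y : M) (hyN : y ∈ N) :
    ∃ a : I → A, y = ∑ i, a i • x i ∧
      ∀ i n, (DirectSum.decompose 𝒜 (a i) n : A) ≠ 0 →
        y ≠ 0 ∧ n + mdeg ℳ (x i) ≤ mdeg ℳ y := by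
  rcases eq_or_ne y 0 with rfl | hy0
  · exact ⟨0, by simp, by simp⟩
  · exact lemA 𝒜 ℳ hM N x hGB (mdeg ℳ y + 1 - n₀).toNat y hyN
      (Or.inr (by have := Int.self_le_toNat (mdeg ℳ y + 1 - n₀); omega))

lemma lemBker {n₀ : ℤ} (hA : ∀ n < (0:ℤ), ∀ a ∈ 𝒜 n, a = (0:A))
    (hM : ∀ n < n₀, ∀ m ∈ ℳ n, m = (0:M))
    (N : Submodule A M) {I : Type*} [Fintype I] (x : I → M)
    (hGB : IsGrobnerBasis ℳ N x)
    (hsyz : (LinearMap.ker (Finsupp.linearCombination A fun i => ini ℳ (x i))).FG) :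
    (LinearMap.ker (Finsupp.linearCombination A x)).FG := by
  classical
  obtain ⟨S, hS⟩ := hsyz
  set d : I → ℤ := fun i => mdeg ℳ (x i) with hd
  set K := LinearMap.ker (Finsupp.linearCombination A fun i => ini ℳ (x i)) with hK
  -- lower bound on the degrees of the x i
  obtain ⟨lb, hlb⟩ : ∃ lb : ℤ, ∀ i, lb ≤ d i := by
    obtain ⟨U, hU⟩ := Finset.exists_le (Finset.univ.image fun i => -(d i))
    exact ⟨-U, fun i => by
      have := hU _ (Finset.mem_image_of_mem _ (Finset.mem_univ i)); omega⟩
  -- the homogeneous component extraction on the free module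
  set Fc : ℤ → (I →₀ A) → (I →₀ A) := fun Dd g =>
    Finsupp.equivFunOnFinite.symm fun i => (DirectSum.decompose 𝒜 (g i) (Dd - d i) : A)
    with hFcdef
  have hFc : ∀ Dd g i, Fc Dd g i = (DirectSum.decompose 𝒜 (g i) (Dd - d i) : A) := by
    intro Dd g i
    simp [hFcdef]
  have hFchom : ∀ Dd g i, Fc Dd g i ∈ 𝒜 (Dd - d i) := by
    intro Dd g i
    rw [hFc]
    exact SetLike.coe_mem _
  -- decomposition of a free module element into homogeneous components
  set Tof : (I →₀ A) → Finset ℤ := fun g =>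
    Finset.univ.biUnion fun i => ((DirectSum.decompose 𝒜 (g i)).support).image (· + d i)
    with hTof
  have hsumFc : ∀ g : I →₀ A, g = ∑ Dd ∈ Tof g, Fc Dd g := by
    intro g
    ext i
    rw [Finsupp.finset_sum_apply]
    rw [Finset.sum_congr rfl fun Dd _ => hFc Dd g i]
    rw [show (∑ Dd ∈ Tof g, (DirectSum.decompose 𝒜 (g i) (Dd - d i) : A))
        = ∑ n ∈ (Tof g).image (· - d i), (DirectSum.decompose 𝒜 (g i) n : A) by
      rw [Finset.sum_image (by intro a _ b _ h; have h' : a - d i = b - d i := h; omega)]]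
    rw [← Finset.sum_subset
      (show (DirectSum.decompose 𝒜 (g i)).support ⊆ (Tof g).image (· - d i) from by
        intro n hn
        rw [Finset.mem_image]
        refine ⟨n + d i, ?_, by ring_nf⟩
        simp only [hTof, Finset.mem_biUnion, Finset.mem_image]
        exact ⟨i, Finset.mem_univ i, n, hn, rfl⟩)
      (by
        intro n _ hn
        rw [DFinsupp.notMem_support_iff.mp hn]
        rfl)]
    exact (DirectSum.sum_support_decompose 𝒜 (g i)).symm
  -- notation for the two linear combinations
  have hπ : ∀ g : I →₀ A, Finsupp.linearCombination A x g = ∑ i, g i • x i :=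
    fun g => lincomb_eq x g
  have hρ : ∀ g : I →₀ A,
      Finsupp.linearCombination A (fun i => ini ℳ (x i)) g = ∑ i, g i • ini ℳ (x i) :=
    fun g => lincomb_eq _ g
  -- components of elements of K are in K
  have hFcK : ∀ g ∈ K, ∀ Dd : ℤ, Fc Dd g ∈ K := by
    intro g hg Dd
    have hg0 : Finsupp.linearCombination A (fun i => ini ℳ (x i)) g = 0 := hg
    have h1 : Finsupp.linearCombination A (fun i => ini ℳ (x i)) (Fc Dd g)
        = (DirectSum.decompose ℳ
            ((Finsupp.linearCombination A (fun i => ini ℳ (x i))) g) Dd : M) := by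
      rw [hρ, hρ, decompose_apply_sum ℳ]
      apply Finset.sum_congr rfl
      intro i _
      rw [decompose_smul_homog_right 𝒜 ℳ (ini_mem ℳ (x i)), hFc]
    have : Finsupp.linearCombination A (fun i => ini ℳ (x i)) (Fc Dd g) = 0 := by
      rw [h1, hg0]
      simp
    exact this
  -- the finite homogeneous generating set of K
  set C : Finset (I →₀ A) := S.biUnion (fun g => (Tof g).image fun Dd => Fc Dd g) with hCdef
  have hCK : ∀ c ∈ C, c ∈ K := by
    intro c hc
    simp only [hCdef, Finset.mem_biUnion, Finset.mem_image] at hc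
    obtain ⟨g, hgS, Dd, _, rfl⟩ := hc
    exact hFcK g (hS ▸ Submodule.subset_span hgS) Dd
  have hChom : ∀ c ∈ C, ∃ Dc : ℤ, ∀ i, c i ∈ 𝒜 (Dc - d i) := by
    intro c hc
    simp only [hCdef, Finset.mem_biUnion, Finset.mem_image] at hc
    obtain ⟨g, _, Dd, _, rfl⟩ := hc
    exact ⟨Dd, fun i => hFchom Dd g i⟩
  have hCspan : Submodule.span A (C : Set (I →₀ A)) = K := by
    apply le_antisymm
    · rw [Submodule.span_le]
      intro c hc
      exact hCK c hc
    · rw [← hS, Submodule.span_le]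
      intro g hgS
      rw [SetLike.mem_coe, hsumFc g]
      apply Submodule.sum_mem
      intro Dd hDd
      apply Submodule.subset_span
      simp only [hCdef, Finset.coe_biUnion, Set.mem_iUnion, Finset.coe_image,
        Set.mem_image, Finset.mem_coe]
      exact ⟨g, hgS, Dd, hDd, rfl⟩
  choose! Dc hDc using hChom
  -- the z-elements are in N and have degree < Dc
  have hzN : ∀ c : I →₀ A, Finsupp.linearCombination A x c ∈ N := by
    intro c
    rw [hπ]
    exact Submodule.sum_mem N fun i _ => Submodule.smul_mem N _ (hGB.1 i)
  have hzdeg : ∀ c ∈ C, ∀ n : ℤ, Dc c ≤ n →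
      (DirectSum.decompose ℳ (Finsupp.linearCombination A x c) n : M) = 0 := by
    intro c hc n hn
    rw [hπ, decompose_apply_sum ℳ,
      Finset.sum_congr rfl fun i _ => decompose_smul_homog_left 𝒜 ℳ (hDc c hc i) (x i) n]
    rcases eq_or_lt_of_le hn with rfl | hgt
    · have h2 : ∀ i, c i • (DirectSum.decompose ℳ (x i) (Dc c - (Dc c - d i)) : M)
          = c i • ini ℳ (x i) := by
        intro i
        rw [show Dc c - (Dc c - d i) = d i by ring]
        rfl
      rw [Finset.sum_congr rfl fun i _ => h2 i, ← hρ]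
      exact hCK c hc
    · rw [Finset.sum_congr rfl fun i _ =>
        (by rw [decompose_eq_zero_of_gt ℳ (by change d i < _; omega), smul_zero] :
          c i • (DirectSum.decompose ℳ (x i) (n - (Dc c - d i)) : M) = 0)]
      simp
  -- reduced expressions for the z-elements
  have hbex : ∀ c : I →₀ A, c ∈ C → ∃ b : I → A,
      Finsupp.linearCombination A x c = ∑ i, b i • x i ∧
      ∀ i n, (DirectSum.decompose 𝒜 (b i) n : A) ≠ 0 →
        Finsupp.linearCombination A x c ≠ 0 ∧
          n + d i ≤ mdeg ℳ (Finsupp.linearCombination A x c) := by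
    intro c _
    exact lemA' 𝒜 ℳ hM N x hGB _ (hzN c)
  choose! b hb1 hb2 using hbex
  -- the generators of the kernel
  set G : Finset (I →₀ A) :=
    C.image (fun c => c - Finsupp.equivFunOnFinite.symm (b c)) with hGdef
  have hGker : ∀ c ∈ C, Finsupp.linearCombination A x
      (c - Finsupp.equivFunOnFinite.symm (b c)) = 0 := by
    intro c hc
    rw [map_sub, hπ (Finsupp.equivFunOnFinite.symm (b c))]
    have hsymmsum : (∑ i, (Finsupp.equivFunOnFinite.symm (b c)) i • x i)
        = ∑ i, b c i • x i :=
      Finset.sum_congr rfl fun i _ => by rw [Finsupp.coe_equivFunOnFinite_symm]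
    rw [hsymmsum, ← hb1 c hc, sub_self]
  -- the degree bound for the reduced expressions
  have hbdeg : ∀ c ∈ C, ∀ i n, (DirectSum.decompose 𝒜 (b c i) n : A) ≠ 0 →
      n + d i < Dc c := by
    intro c hc i n hne
    obtain ⟨hz0, hle⟩ := hb2 c hc i n hne
    have hlt : mdeg ℳ (Finsupp.linearCombination A x c) < Dc c := by
      by_contra hcon
      exact decompose_mdeg_ne_zero ℳ hz0 (hzdeg c hc _ (not_lt.mp hcon))
    omega
  -- main induction
  have main : ∀ (k : ℕ) (s : I →₀ A), Finsupp.linearCombination A x s = 0 →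
      (∀ i n, (DirectSum.decompose 𝒜 (s i) n : A) ≠ 0 → n + d i < lb + k) →
      s ∈ Submodule.span A (G : Set (I →₀ A)) := by
    intro k
    induction k with
    | zero =>
      intro s hs0 hbound
      have hs : s = 0 := by
        ext i
        by_contra hsi
        obtain ⟨n, hn⟩ := dsupp_nonempty 𝒜 hsi
        have hn0 : 0 ≤ n := by
          by_contra hneg
          exact hn (hA n (by omega) _ (SetLike.coe_mem _))
        have h1 := hbound i n hn
        have h2 := hlb i
        push_cast at h1
        omega
      rw [hs]
      exact Submodule.zero_mem _
    | succ k ih =>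
      intro s hs0 hbound
      set Dtop : ℤ := lb + k with hDtop
      have hbound' : ∀ i n, (DirectSum.decompose 𝒜 (s i) n : A) ≠ 0 → n + d i ≤ Dtop := by
        intro i n hne
        have := hbound i n hne
        push_cast at this
        omega
      set t : I →₀ A := Fc Dtop s with ht
      have htK : t ∈ K := by
        have h1 : Finsupp.linearCombination A (fun i => ini ℳ (x i)) t
            = (DirectSum.decompose ℳ (Finsupp.linearCombination A x s) Dtop : M) := by
          rw [hρ, hπ, decompose_apply_sum ℳ]
          apply Finset.sum_congr rfl
          intro i _
          rw [decompose_smul_bound 𝒜 ℳ (s i) (x i) Dtop (fun m hm => hbound' i m hm), hFc]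
        show Finsupp.linearCombination A (fun i => ini ℳ (x i)) t = 0
        rw [h1, hs0]
        simp
      -- express t in terms of the homogeneous generators
      have htspan : t ∈ Submodule.span A (Set.range fun j : {c // c ∈ C} => (j : I →₀ A)) := by
        have hrange : Set.range (fun j : {c // c ∈ C} => (j : I →₀ A)) = (C : Set (I →₀ A)) := by
          rw [Subtype.range_coe_subtype]
          ext c
          simp
        rw [hrange, hCspan]
        exact htK
      rw [Submodule.mem_span_range_iff_exists_fun] at htspan
      obtain ⟨β, hβ⟩ := htspan
      set aco : {c // c ∈ C} → A :=
        fun j => (DirectSum.decompose 𝒜 (β j) (Dtop - Dc j) : A) with haco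
      have hacohom : ∀ j : {c // c ∈ C}, aco j ∈ 𝒜 (Dtop - Dc j) :=
        fun j => SetLike.coe_mem _
      have hteq : ∀ i, t i = ∑ j : {c // c ∈ C}, aco j * (j : I →₀ A) i := by
        intro i
        have h1 := congrArg (fun z : I →₀ A =>
          (DirectSum.decompose 𝒜 (z i) (Dtop - d i) : A)) hβ
        simp only at h1
        rw [Finsupp.finset_sum_apply, decompose_apply_sum 𝒜,
          Finset.sum_congr rfl (fun j _ => by
            rw [Finsupp.smul_apply, smul_eq_mul,
              show (β j * (j : I →₀ A) i) = β j • ((j : I →₀ A) i) from rfl,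
              decompose_smul_homog_right 𝒜 𝒜 (hDc j j.2 i) (β j) (Dtop - d i),
              show Dtop - d i - (Dc j - d i) = Dtop - Dc j by ring])] at h1
        rw [DirectSum.decompose_of_mem_same 𝒜 (hFchom Dtop s i)] at h1
        rw [show t i = Fc Dtop s i from rfl, ← h1]
        apply Finset.sum_congr rfl
        intro j _
        rw [smul_eq_mul]
      -- the corrected element
      set s' : I →₀ A := s - ∑ j : {c // c ∈ C},
        aco j • ((j : I →₀ A) - Finsupp.equivFunOnFinite.symm (b j)) with hs'
      have hs'ker : Finsupp.linearCombination A x s' = 0 := by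
        rw [hs', map_sub, hs0, map_sum, Finset.sum_congr rfl (fun j _ => by
          rw [map_smul, hGker j j.2, smul_zero])]
        simp
      have hs'i : ∀ i, s' i = (s i - t i) + ∑ j : {c // c ∈ C}, aco j * b (j : I →₀ A) i := by
        intro i
        rw [hs', Finsupp.sub_apply, Finsupp.finset_sum_apply]
        rw [Finset.sum_congr rfl (fun j _ => by
          rw [Finsupp.smul_apply, Finsupp.sub_apply, smul_sub, smul_eq_mul, smul_eq_mul,
            Finsupp.coe_equivFunOnFinite_symm])]
        rw [Finset.sum_sub_distrib, ← hteq i]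
        ring
      have hs'bound : ∀ i n, (DirectSum.decompose 𝒜 (s' i) n : A) ≠ 0 → n + d i < lb + k := by
        intro i n hne
        by_contra hcon
        push_neg at hcon
        apply hne
        rw [hs'i i, decompose_apply_add' 𝒜, decompose_apply_sub 𝒜, decompose_apply_sum 𝒜]
        have h3 : ∀ j : {c // c ∈ C},
            (DirectSum.decompose 𝒜 (aco j * b (j : I →₀ A) i) n : A) = 0 := by
          intro j
          rw [show aco j * b (j : I →₀ A) i = aco j • b (j : I →₀ A) i from rfl,
            decompose_smul_homog_left 𝒜 𝒜 (hacohom j) _ n]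
          rcases eq_or_ne (DirectSum.decompose 𝒜 (b (j : I →₀ A) i)
              (n - (Dtop - Dc j)) : A) 0 with h | h
          · rw [h, smul_zero]
          · have := hbdeg j j.2 i _ h
            omega
        rw [Finset.sum_congr rfl fun j _ => h3 j]
        rw [Finset.sum_const_zero, add_zero]
        rcases eq_or_ne n (Dtop - d i) with rfl | hnne
        · rw [DirectSum.decompose_of_mem_same 𝒜 (hFchom Dtop s i)]
          rw [show t i = Fc Dtop s i from rfl, hFc]
          exact sub_self _
        · have h4 : (DirectSum.decompose 𝒜 (s i) n : A) = 0 := by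
            by_contra h
            have := hbound' i n h
            omega
          have h5 : (DirectSum.decompose 𝒜 (t i) n : A) = 0 :=
            DirectSum.decompose_of_mem_ne 𝒜 (hFchom Dtop s i) (Ne.symm hnne)
          rw [h4, h5, sub_self]
      have hs'span := ih s' hs'ker hs'bound
      have hfinal : s = s' + ∑ j : {c // c ∈ C},
          aco j • ((j : I →₀ A) - Finsupp.equivFunOnFinite.symm (b j)) := by
        rw [hs']
        abel
      rw [hfinal]
      apply Submodule.add_mem _ hs'span
      apply Submodule.sum_mem
      intro j _
      apply Submodule.smul_mem
      apply Submodule.subset_span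
      simp only [hGdef, Finset.coe_image, Set.mem_image, Finset.mem_coe]
      exact ⟨(j : I →₀ A), j.2, rfl⟩
  -- conclude : the kernel equals the span of G
  have hker : LinearMap.ker (Finsupp.linearCombination A x)
      = Submodule.span A (G : Set (I →₀ A)) := by
    apply le_antisymm
    · intro s hs
      obtain ⟨U, hU⟩ := Finset.exists_le
        ((Finset.univ : Finset I).image fun i => mdeg 𝒜 (s i) + d i)
      apply main (U + 1 - lb).toNat s hs
      intro i n hne
      have h1 : n ≤ mdeg 𝒜 (s i) :=
        le_csSup (dsupp_finite 𝒜 (s i)).bddAbove hne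
      have h2 : mdeg 𝒜 (s i) + d i ≤ U :=
        hU _ (Finset.mem_image_of_mem _ (Finset.mem_univ i))
      have h3 := Int.self_le_toNat (U + 1 - lb)
      omega
    · rw [Submodule.span_le]
      intro g hg
      simp only [hGdef, Finset.coe_image, Set.mem_image, Finset.mem_coe] at hg
      obtain ⟨c, hc, rfl⟩ := hg
      exact hGker c hc
  exact ⟨G, hker.symm⟩

end LemB2


/-- If `N` admits a finite Gröbner basis whose initial terms have a finitely generated
syzygy module, then `N` is finitely presented. -/
theorem stmt_19 {A M : Type*} [CommRing A] (𝒜 : ℤ → AddSubgroup A) [GradedRing 𝒜]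
    [AddCommGroup M] [Module A M] (ℳ : ℤ → AddSubgroup M) [DirectSum.Decomposition ℳ]
    [SetLike.GradedSMul 𝒜 ℳ]
    (hA : RingNonnegGraded 𝒜) (hM : ModuleBddBelow ℳ)
    (N : Submodule A M) {I : Type*} [Finite I] (x : I → M)
    (hGB : IsGrobnerBasis ℳ N x)
    (hsyz : (LinearMap.ker (Finsupp.linearCombination A fun i => ini ℳ (x i))).FG) :
    Module.FinitePresentation A N := by
  classical
  cases nonempty_fintype I
  obtain ⟨n₀, hM0⟩ := hM
  have hA0 : ∀ n < (0:ℤ), ∀ a ∈ 𝒜 n, a = (0:A) := hA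
  have hkerFG : (LinearMap.ker (Finsupp.linearCombination A x)).FG :=
    lemBker 𝒜 ℳ hA0 hM0 N x hGB hsyz
  have hsub : ∀ a : I →₀ A, Finsupp.linearCombination A x a ∈ N := by
    intro a
    rw [lincomb_eq x]
    exact Submodule.sum_mem N fun i _ => Submodule.smul_mem N _ (hGB.1 i)
  set l : (I →₀ A) →ₗ[A] N := (Finsupp.linearCombination A x).codRestrict N hsub with hl
  have hsurj : Function.Surjective l := by
    rintro ⟨y, hy⟩
    obtain ⟨a, ha1, _⟩ := lemA' 𝒜 ℳ hM0 N x hGB y hy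
    refine ⟨Finsupp.equivFunOnFinite.symm a, Subtype.ext ?_⟩
    have : Finsupp.linearCombination A x (Finsupp.equivFunOnFinite.symm a)
        = ∑ i, a i • x i := by
      rw [lincomb_eq x]
      exact Finset.sum_congr rfl fun i _ => by
        rw [Finsupp.coe_equivFunOnFinite_symm]
    show Finsupp.linearCombination A x (Finsupp.equivFunOnFinite.symm a) = y
    rw [this, ha1]
  have hkl : LinearMap.ker l = LinearMap.ker (Finsupp.linearCombination A x) :=
    LinearMap.ker_codRestrict N _ hsub
  exact Module.finitePresentation_of_surjective l hsurj (hkl ▸ hkerFG)
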